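/- Let G be a finite group with a projective representation ω on a finite-dimensional Hilbert space such that no two distinct nontrivial group elements have commuting representatives (maximal noncommutativity), and G is abelian. Then every irreducible such projective representation has dimension √|G|, so the logical space carries log₂√|G| qubits when |G| is a power of 4. -/

import Mathlib

/-!
Average a matrix `A` over the group: `∑ g, V g * A * (V g)ᴴ` commutes with every `V h`, because
conjugating by `V h` only permutes the terms, the cocycle phases cancelling as `|ω| = 1`.
By Schur's lemma it is therefore the scalar `|G| tr A / n`. Comparing the `(i, j)` entries of the
averages of the matrix units `E_ij` gives the orthogonality relation `∑ g, |tr V g|² = |G|`.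
Maximal noncommutativity makes every `V g` with `g ≠ 1` traceless (conjugating it by some `V h`
multiplies it by a phase `≠ 1`), while `V 1` is a phase times the identity, so the same sum is `n²`.
-/

open Matrix

namespace Matrix

variable {ι R : Type*} [Fintype ι] [DecidableEq ι]

theorem mul_single_one_mul_apply [CommSemiring R] (A B : Matrix ι ι R) (i j k l : ι) :
    (A * single i j (1 : R) * B) k l = A k i * B j l := by
  rw [mul_apply, Finset.sum_eq_single j (fun b _ hb => by simp [hb]) (by simp)]
  simp

theorem sum_sum_mul_single_one_mul_star_apply [CommSemiring R] [StarRing R] (U : Matrix ι ι R) :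
    ∑ i, ∑ j, (U * single i j (1 : R) * star U : Matrix ι ι R) i j =
      trace U * star (trace U) := by
  simp only [mul_single_one_mul_apply, star_apply, trace, diag_apply, star_sum,
    Finset.sum_mul_sum]

theorem trace_mul_mul_star_of_mem_unitaryGroup [CommRing R] [StarRing R]
    {U : Matrix ι ι R} (hU : U ∈ unitaryGroup ι R) (A : Matrix ι ι R) :
    trace (U * A * star U) = trace A := by
  rw [trace_mul_cycle, mem_unitaryGroup_iff'.mp hU, one_mul]

theorem trace_eq_zero_of_smul_conj_eq_smul {K : Type*} [Field K] [StarRing K]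
    {U A : Matrix ι ι K} (hU : U ∈ unitaryGroup ι K) {a b : K} (hab : a ≠ b)
    (h : a • (U * A * star U) = b • A) : trace A = 0 := by
  have := congrArg trace h
  rw [trace_smul, trace_smul, trace_mul_mul_star_of_mem_unitaryGroup hU, smul_eq_mul,
    smul_eq_mul, ← sub_eq_zero, ← sub_mul] at this
  exact (mul_eq_zero.mp this).resolve_left (sub_ne_zero.mpr hab)

def IsIrreducibleFamily {K α : Type*} [Field K] (V : α → Matrix ι ι K) : Prop :=
  ∀ W : Submodule K (ι → K), (∀ a, W.map (toLin' (V a)) ≤ W) → W = ⊥ ∨ W = ⊤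

theorem exists_eq_smul_one_of_forall_commute {K α : Type*} [Field K] [IsAlgClosed K]
    [Nonempty ι] {V : α → Matrix ι ι K} (hirr : IsIrreducibleFamily V)
    {T : Matrix ι ι K} (hT : ∀ a, Commute (V a) T) : ∃ c : K, T = c • 1 := by
  obtain ⟨c, hc⟩ := Module.End.exists_eigenvalue (toLin' T)
  refine ⟨c, ?_⟩
  have hinv : ∀ a, (Module.End.eigenspace (toLin' T) c).map (toLin' (V a)) ≤
      Module.End.eigenspace (toLin' T) c := by
    rintro a _ ⟨x, hx, rfl⟩
    rw [SetLike.mem_coe, Module.End.mem_eigenspace_iff] at hx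
    rw [Module.End.mem_eigenspace_iff, ← toLin'_mul_apply, ← (hT a).eq, toLin'_mul_apply, hx,
      map_smul]
  obtain hbot | htop := hirr _ hinv
  · exact absurd hbot hc
  · refine toLin'.injective (LinearMap.ext fun x => ?_)
    have hx := Module.End.mem_eigenspace_iff.mp (htop ▸ Submodule.mem_top : x ∈ _)
    rw [hx, map_smul, toLin'_one]
    rfl

variable {G : Type*}

def twirl [Fintype G] [CommSemiring R] [StarRing R] (V : G → Matrix ι ι R) (A : Matrix ι ι R) :
    Matrix ι ι R :=
  ∑ g, V g * A * star (V g)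

theorem trace_twirl [Fintype G] [CommRing R] [StarRing R] {V : G → Matrix ι ι R}
    (hV : ∀ g, V g ∈ unitaryGroup ι R) (A : Matrix ι ι R) :
    trace (twirl V A) = Fintype.card G • trace A := by
  simp only [twirl, trace_sum, trace_mul_mul_star_of_mem_unitaryGroup (hV _), Finset.sum_const,
    Finset.card_univ]

theorem sum_sum_twirl_single_one_apply [Fintype G] [CommSemiring R] [StarRing R]
    (V : G → Matrix ι ι R) :
    ∑ i, ∑ j, twirl V (single i j (1 : R)) i j = ∑ g, trace (V g) * star (trace (V g)) := by
  simp only [twirl, sum_apply]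
  rw [Finset.sum_congr rfl fun i _ => Finset.sum_comm, Finset.sum_comm]
  exact Finset.sum_congr rfl fun g _ => sum_sum_mul_single_one_mul_star_apply (V g)

end Matrix

section ProjectiveRepresentation

variable {G ι : Type*} [Fintype ι] [DecidableEq ι]

structure IsUnitaryProjRep [Mul G] (ω : G → G → ℂ) (V : G → Matrix ι ι ℂ) : Prop where
  mem_unitaryGroup : ∀ g, V g ∈ unitaryGroup ι ℂ
  mul_eq : ∀ g h, V g * V h = ω g h • V (g * h)

def IsMaxNoncommutative [One G] (ω : G → G → ℂ) : Prop :=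
  ∀ g : G, g ≠ 1 → ∃ h : G, ω g h ≠ ω h g

namespace IsUnitaryProjRep

variable {ω : G → G → ℂ} {V : G → Matrix ι ι ℂ}

theorem mul_star_self [Mul G] (hV : IsUnitaryProjRep ω V) (g : G) : V g * star (V g) = 1 :=
  mem_unitaryGroup_iff.mp (hV.mem_unitaryGroup g)

theorem star_cocycle_mul_self [Mul G] [Nonempty ι] (hV : IsUnitaryProjRep ω V) (g h : G) :
    star (ω g h) * ω g h = 1 := by
  have hgh := mem_unitaryGroup_iff.mp (mul_mem (hV.mem_unitaryGroup g) (hV.mem_unitaryGroup h))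
  rw [hV.mul_eq, star_smul, smul_mul_smul_comm, hV.mul_star_self] at hgh
  obtain ⟨i⟩ := ‹Nonempty ι›
  simpa [mul_comm] using congrFun₂ hgh i i

theorem apply_one [MulOneClass G] (hV : IsUnitaryProjRep ω V) : V 1 = ω 1 1 • 1 := by
  calc V 1 = V 1 * V 1 * star (V 1) := by rw [mul_assoc, hV.mul_star_self, mul_one]
    _ = ω 1 1 • 1 := by rw [hV.mul_eq, one_mul, smul_mul_assoc, hV.mul_star_self]

theorem trace_one_mul_star [MulOneClass G] [Nonempty ι] (hV : IsUnitaryProjRep ω V) :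
    trace (V 1) * star (trace (V 1)) = (Fintype.card ι : ℂ) ^ 2 := by
  rw [hV.apply_one, trace_smul, trace_one, smul_eq_mul, star_mul', star_natCast]
  linear_combination (Fintype.card ι : ℂ) ^ 2 * hV.star_cocycle_mul_self 1 1

theorem trace_eq_zero_of_commute [Mul G] (hV : IsUnitaryProjRep ω V) {g h : G}
    (hgh : Commute g h) (hne : ω g h ≠ ω h g) : trace (V g) = 0 := by
  have hswap : ω g h • (V h * V g) = ω h g • (V g * V h) := by
    rw [hV.mul_eq, hV.mul_eq, smul_smul, smul_smul, mul_comm (ω g h), hgh.eq]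
  refine trace_eq_zero_of_smul_conj_eq_smul (hV.mem_unitaryGroup h) hne ?_
  rw [← smul_mul_assoc, hswap, smul_mul_assoc, mul_assoc, hV.mul_star_self, mul_one]

theorem conj_twirl [Group G] [Fintype G] [Nonempty ι] (hV : IsUnitaryProjRep ω V)
    (h : G) (A : Matrix ι ι ℂ) : V h * twirl V A * star (V h) = twirl V A := by
  have hconj : ∀ g, V h * (V g * A * star (V g)) * star (V h) =
      V (h * g) * A * star (V (h * g)) := by
    intro g
    calc V h * (V g * A * star (V g)) * star (V h) = V h * V g * A * star (V h * V g) := by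
          rw [star_mul]; noncomm_ring
      _ = V (h * g) * A * star (V (h * g)) := by
          rw [hV.mul_eq, star_smul, smul_mul_assoc, smul_mul_assoc, mul_smul_comm, smul_smul,
            mul_comm, hV.star_cocycle_mul_self, one_smul]
  simp only [twirl, Finset.mul_sum, Finset.sum_mul, hconj]
  exact Fintype.sum_equiv (Equiv.mulLeft h) _ _ fun _ => rfl

theorem commute_twirl [Group G] [Fintype G] [Nonempty ι] (hV : IsUnitaryProjRep ω V)
    (h : G) (A : Matrix ι ι ℂ) : Commute (V h) (twirl V A) := by
  calc V h * twirl V A = V h * twirl V A * star (V h) * V h := by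
        rw [mul_assoc _ (star _), mem_unitaryGroup_iff'.mp (hV.mem_unitaryGroup h), mul_one]
    _ = twirl V A * V h := by rw [hV.conj_twirl]

theorem card_smul_twirl [Group G] [Fintype G] [Nonempty ι] (hV : IsUnitaryProjRep ω V)
    (hirr : IsIrreducibleFamily V) (A : Matrix ι ι ℂ) :
    (Fintype.card ι : ℂ) • twirl V A = ((Fintype.card G : ℂ) * trace A) • 1 := by
  obtain ⟨c, hc⟩ := exists_eq_smul_one_of_forall_commute hirr (hV.commute_twirl · A)
  have htr := trace_twirl hV.mem_unitaryGroup A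
  rw [hc, trace_smul, trace_one, smul_eq_mul, nsmul_eq_mul] at htr
  rw [hc, smul_smul, ← htr, mul_comm]

theorem sum_trace_mul_star_trace [Group G] [Fintype G] [Nonempty ι] (hV : IsUnitaryProjRep ω V)
    (hirr : IsIrreducibleFamily V) :
    ∑ g, trace (V g) * star (trace (V g)) = Fintype.card G := by
  have hentry : ∀ i j : ι, (Fintype.card ι : ℂ) * twirl V (single i j 1) i j =
      if i = j then (Fintype.card G : ℂ) else 0 := by
    intro i j
    have := congrFun₂ (hV.card_smul_twirl hirr (single i j 1)) i j
    rw [Matrix.smul_apply, smul_eq_mul] at this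
    rw [this]
    split_ifs with hij
    · subst hij; simp
    · simp [one_apply_ne hij, trace_single_eq_of_ne _ _ _ hij]
  have hsum : (Fintype.card ι : ℂ) * ∑ g, trace (V g) * star (trace (V g)) =
      Fintype.card ι * Fintype.card G := by
    rw [← sum_sum_twirl_single_one_apply]
    simp only [Finset.mul_sum, hentry, Finset.sum_ite_eq, Finset.mem_univ, if_true,
      Finset.sum_const, Finset.card_univ, nsmul_eq_mul]
  exact mul_left_cancel₀ (Nat.cast_ne_zero.mpr Fintype.card_ne_zero) hsum

theorem sum_trace_mul_star_trace_of_isMaxNoncommutative [CommGroup G] [Fintype G] [Nonempty ι]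
    (hV : IsUnitaryProjRep ω V) (hmnc : IsMaxNoncommutative ω) :
    ∑ g, trace (V g) * star (trace (V g)) = (Fintype.card ι : ℂ) ^ 2 := by
  rw [Finset.sum_eq_single 1 (fun g _ hg => ?_) (by simp), hV.trace_one_mul_star]
  obtain ⟨h, hne⟩ := hmnc g hg
  rw [hV.trace_eq_zero_of_commute (Commute.all g h) hne, zero_mul]

theorem card_eq_sq [CommGroup G] [Fintype G] [Nonempty ι] (hV : IsUnitaryProjRep ω V)
    (hmnc : IsMaxNoncommutative ω) (hirr : IsIrreducibleFamily V) :
    Fintype.card G = Fintype.card ι ^ 2 := by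
  exact_mod_cast (hV.sum_trace_mul_star_trace hirr).symm.trans
    (hV.sum_trace_mul_star_trace_of_isMaxNoncommutative hmnc)

end IsUnitaryProjRep

end ProjectiveRepresentation

theorem mnc_projective_rep_dim_general {G : Type*} [CommGroup G] [Fintype G]
    (n : ℕ) (hn : 0 < n)
    (ω : G → G → ℂ) (V : G → Matrix (Fin n) (Fin n) ℂ)
    (hunit : ∀ g, V g ∈ Matrix.unitaryGroup (Fin n) ℂ)
    (hproj : ∀ g h, V g * V h = ω g h • V (g * h))
    (hMNC : ∀ g : G, g ≠ 1 → ∃ h : G, ω g h ≠ ω h g)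
    (hirr : ∀ W : Submodule ℂ (Fin n → ℂ),
      (∀ g, W.map (Matrix.toLin' (V g)) ≤ W) → W = ⊥ ∨ W = ⊤) :
    (n : ℝ) = Real.sqrt (Fintype.card G) ∧
      ∀ k : ℕ, Fintype.card G = 4 ^ k → n = 2 ^ k := by
  have : Nonempty (Fin n) := ⟨⟨0, hn⟩⟩
  have hcard : Fintype.card G = n ^ 2 := by
    simpa using (IsUnitaryProjRep.mk hunit hproj).card_eq_sq hMNC hirr
  refine ⟨by rw [hcard, Nat.cast_pow, Real.sqrt_sq n.cast_nonneg], fun k hk => ?_⟩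
  exact Nat.pow_left_injective two_ne_zero (show n ^ 2 = (2 ^ k) ^ 2 by
    rw [← hcard, hk, ← pow_mul, mul_comm, pow_mul]; norm_num)

/-- a maximally noncommutative irreducible projective representation of a
finite abelian group `G` has dimension `√|G|`; when `|G| = 4^k` the logical space
carries `k = log₂ √|G|` qubits. -/
theorem mnc_projective_rep_dim {G : Type*} [CommGroup G] [Fintype G] [DecidableEq G]
    (n : ℕ) (hn : 0 < n)
    (ω : G → G → ℂ) (V : G → Matrix (Fin n) (Fin n) ℂ)
    (hunit : ∀ g, V g ∈ Matrix.unitaryGroup (Fin n) ℂ)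
    (hproj : ∀ g h, V g * V h = ω g h • V (g * h))
    (hMNC : ∀ g : G, g ≠ 1 → ∃ h : G, ω g h ≠ ω h g)
    (hirr : ∀ W : Submodule ℂ (Fin n → ℂ),
      (∀ g, W.map (Matrix.toLin' (V g)) ≤ W) → W = ⊥ ∨ W = ⊤) :
    (n : ℝ) = Real.sqrt (Fintype.card G) ∧
      ∀ k : ℕ, Fintype.card G = 4 ^ k → n = 2 ^ k :=
  mnc_projective_rep_dim_general n hn ω V hunit hproj hMNC hirr
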